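/- Let (A,[·,·],·) be a finite-dimensional Poisson algebra over a field and 𝔅 a nondegenerate bilinear form on A. Let I_𝔅: A* → A be the linear isomorphism defined by ⟨I_𝔅⁻¹(a), b⟩ = 𝔅(a,b) and r_𝔅 ∈ A⊗A the 2-tensor defined by ⟨r_𝔅, x*⊗y*⟩ = ⟨I_𝔅(x*), y*⟩. Then (A,[·,·],·,𝔅) is a quadratic Poisson algebra (i.e., 𝔅 is symmetric and invariant) if and only if r_𝔅 is symmetric (τ(r_𝔅) = r_𝔅) and (ad,L)-invariant. -/

import Mathlib

open TensorProduct

section Preamble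

variable {k A : Type*} [Field k] [AddCommGroup A] [Module k A]

/-- The Poisson algebra axioms for a pair of bilinear operations `br` (the Lie bracket)
and `mul` (the commutative associative product), including the Leibniz compatibility. -/
structure IsPoisson {k A : Type*} [Field k] [AddCommGroup A] [Module k A]
    (br mul : A →ₗ[k] A →ₗ[k] A) : Prop where
  antisymm : ∀ a b, br a b = - br b a
  jacobi : ∀ a b c, br a (br b c) = br (br a b) c + br b (br a c)
  comm : ∀ a b, mul a b = mul b a
  assoc : ∀ a b c, mul (mul a b) c = mul a (mul b c)
  leibniz : ∀ a b c, br a (mul b c) = mul (br a b) c + mul b (br a c)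

/-- `r ↦ r₊`, where `⟨r₊(x*), y*⟩ = ⟨r, x* ⊗ y*⟩`. -/
noncomputable def rPlus : (A ⊗[k] A) →ₗ[k] Module.Dual k A →ₗ[k] A :=
  TensorProduct.lift <| LinearMap.mk₂ k
    (fun a b => (Module.Dual.eval k A a).smulRight b)
    (fun a a' b => by ext f; simp [add_smul])
    (fun c a b => by ext f; simp [smul_smul])
    (fun a b b' => by ext f; simp)
    (fun c a b => by ext f; simp [smul_smul, mul_comm])

/-- The flip `τ : A ⊗ A → A ⊗ A`. -/
noncomputable def tauT : (A ⊗[k] A) →ₗ[k] A ⊗[k] A := (TensorProduct.comm k A A).toLinearMap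

/-- `r ↦ r₋`, where `⟨r₊(x*), y*⟩ = ⟨r, x* ⊗ y*⟩ = −⟨x*, r₋(y*)⟩`. -/
noncomputable def rMinus : (A ⊗[k] A) →ₗ[k] Module.Dual k A →ₗ[k] A :=
  - (rPlus ∘ₗ tauT)

@[simp] lemma rPlus_tmul (a b : A) (f : Module.Dual k A) :
    rPlus (a ⊗ₜ[k] b) f = f a • b := rfl

@[simp] lemma dualMap_add_apply (f g : A →ₗ[k] A) (y : Module.Dual k A) :
    (f + g).dualMap y = f.dualMap y + g.dualMap y := by ext a; simp

@[simp] lemma dualMap_smul_apply (c : k) (f : A →ₗ[k] A) (y : Module.Dual k A) :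
    (c • f).dualMap y = c • f.dualMap y := by ext a; simp

@[simp] lemma dualMap_neg_apply (f : A →ₗ[k] A) (y : Module.Dual k A) :
    (-f).dualMap y = - f.dualMap y := by ext a; simp

noncomputable def T1213 (m : A →ₗ[k] A →ₗ[k] A) :
    (A ⊗[k] A) ⊗[k] (A ⊗[k] A) →ₗ[k] A ⊗[k] (A ⊗[k] A) :=
  (TensorProduct.map (TensorProduct.lift m) LinearMap.id) ∘ₗ
    (TensorProduct.tensorTensorTensorComm k A A A A).toLinearMap

noncomputable def T1323 (m : A →ₗ[k] A →ₗ[k] A) :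
    (A ⊗[k] A) ⊗[k] (A ⊗[k] A) →ₗ[k] A ⊗[k] (A ⊗[k] A) :=
  (TensorProduct.assoc k A A A).toLinearMap ∘ₗ
    (TensorProduct.map LinearMap.id (TensorProduct.lift m)) ∘ₗ
    (TensorProduct.tensorTensorTensorComm k A A A A).toLinearMap

noncomputable def T2312 (m : A →ₗ[k] A →ₗ[k] A) :
    (A ⊗[k] A) ⊗[k] (A ⊗[k] A) →ₗ[k] A ⊗[k] (A ⊗[k] A) :=
  (TensorProduct.leftComm k A A A).toLinearMap ∘ₗ
    (TensorProduct.map (TensorProduct.lift m ∘ₗ (TensorProduct.comm k A A).toLinearMap)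
      LinearMap.id) ∘ₗ
    (TensorProduct.tensorTensorTensorComm k A A A A).toLinearMap ∘ₗ
    (TensorProduct.map (TensorProduct.comm k A A).toLinearMap LinearMap.id)

noncomputable def T1223 (m : A →ₗ[k] A →ₗ[k] A) :
    (A ⊗[k] A) ⊗[k] (A ⊗[k] A) →ₗ[k] A ⊗[k] (A ⊗[k] A) :=
  (TensorProduct.leftComm k A A A).toLinearMap ∘ₗ
    (TensorProduct.map (TensorProduct.lift m) LinearMap.id) ∘ₗ
    (TensorProduct.tensorTensorTensorComm k A A A A).toLinearMap ∘ₗ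
    (TensorProduct.map (TensorProduct.comm k A A).toLinearMap LinearMap.id)

/-- `C(r) = [r₁₂,r₁₃] + [r₁₃,r₂₃] + [r₁₂,r₂₃]` for the bracket `br`. -/
noncomputable def cybe (br : A →ₗ[k] A →ₗ[k] A) (r : A ⊗[k] A) : A ⊗[k] (A ⊗[k] A) :=
  T1213 br (r ⊗ₜ[k] r) + T1323 br (r ⊗ₜ[k] r) + T1223 br (r ⊗ₜ[k] r)

/-- `A(r) = r₁₂·r₁₃ + r₁₃·r₂₃ − r₂₃·r₁₂` for the product `mul`. -/
noncomputable def aybe (mul : A →ₗ[k] A →ₗ[k] A) (r : A ⊗[k] A) : A ⊗[k] (A ⊗[k] A) :=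
  T1213 mul (r ⊗ₜ[k] r) + T1323 mul (r ⊗ₜ[k] r) - T2312 mul (r ⊗ₜ[k] r)

/-- `r` is a solution of the Poisson Yang–Baxter equation: `C(r) = 0` and `A(r) = 0`. -/
def IsPYBESolution (br mul : A →ₗ[k] A →ₗ[k] A) (r : A ⊗[k] A) : Prop :=
  cybe br r = 0 ∧ aybe mul r = 0

variable (k A) in
/-- `σ₁₃ : a ⊗ b ⊗ c ↦ c ⊗ b ⊗ a`. -/
noncomputable def sigma13 : A ⊗[k] (A ⊗[k] A) →ₗ[k] A ⊗[k] (A ⊗[k] A) :=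
  (TensorProduct.map LinearMap.id (TensorProduct.comm k A A).toLinearMap) ∘ₗ
    (TensorProduct.leftComm k A A A).toLinearMap ∘ₗ
    (TensorProduct.map LinearMap.id (TensorProduct.comm k A A).toLinearMap)

/-- `s ∈ A ⊗ A` is `(ad, L)`-invariant:
`(ad(a)⊗id + id⊗ad(a))(s) = 0` and `(L(a)⊗id − id⊗L(a))(s) = 0` for all `a`. -/
def IsAdLInvariant (br mul : A →ₗ[k] A →ₗ[k] A) (s : A ⊗[k] A) : Prop :=
  ∀ a : A,
    TensorProduct.map (br a) LinearMap.id s + TensorProduct.map LinearMap.id (br a) s = 0 ∧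
    TensorProduct.map (mul a) LinearMap.id s - TensorProduct.map LinearMap.id (mul a) s = 0

/-- The bracket `[x*,y*]_r = −ad*(r₊(x*))y* + ad*(r₋(y*))x*` on the dual space. -/
noncomputable def dualBr (br : A →ₗ[k] A →ₗ[k] A) (r : A ⊗[k] A) :
    Module.Dual k A →ₗ[k] Module.Dual k A →ₗ[k] Module.Dual k A :=
  LinearMap.mk₂ k
    (fun x y => - (br (rPlus r x)).dualMap y + (br (rMinus r y)).dualMap x)
    (fun x x' y => by simp [map_add]; try abel)
    (fun c x y => by simp [map_smul, smul_add]; try abel)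
    (fun x y y' => by simp [map_add]; try abel)
    (fun c x y => by simp [map_smul, smul_add]; try abel)

/-- The product `x*·_r y* = L*(r₊(x*))y* + L*(r₋(y*))x*` on the dual space. -/
noncomputable def dualMul (mul : A →ₗ[k] A →ₗ[k] A) (r : A ⊗[k] A) :
    Module.Dual k A →ₗ[k] Module.Dual k A →ₗ[k] Module.Dual k A :=
  LinearMap.mk₂ k
    (fun x y => (mul (rPlus r x)).dualMap y + (mul (rMinus r y)).dualMap x)
    (fun x x' y => by simp [map_add]; try abel)
    (fun c x y => by simp [map_smul, smul_add]; try abel)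
    (fun x y y' => by simp [map_add]; try abel)
    (fun c x y => by simp [map_smul, smul_add]; try abel)

/-- The descendent operation `a ∘_P b = (P a) ∘ b + a ∘ (P b) + λ a ∘ b`. -/
noncomputable def descOp (m : A →ₗ[k] A →ₗ[k] A) (lam : k) (P : A →ₗ[k] A) :
    A →ₗ[k] A →ₗ[k] A :=
  LinearMap.mk₂ k
    (fun a b => m (P a) b + m a (P b) + lam • m a b)
    (fun a a' b => by simp [map_add, smul_add]; try abel)
    (fun c a b => by simp [map_smul, smul_add, smul_smul, mul_comm]; try abel)
    (fun a b b' => by simp [map_add, smul_add]; try abel)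
    (fun c a b => by simp [map_smul, smul_add, smul_smul, mul_comm]; try abel)

/-- `P` is a Rota–Baxter operator of weight `λ` on the Poisson algebra `(A, br, mul)`. -/
def IsRotaBaxter (br mul : A →ₗ[k] A →ₗ[k] A) (lam : k) (P : A →ₗ[k] A) : Prop :=
  (∀ a b, br (P a) (P b) = P (br (P a) b + br a (P b) + lam • br a b)) ∧
  (∀ a b, mul (P a) (P b) = P (mul (P a) b + mul a (P b) + lam • mul a b))

/-- `((A, br, mul), B, P)` is a quadratic Rota–Baxter Poisson algebra of weight `λ`. -/
structure IsQuadraticRotaBaxter {k A : Type*} [Field k] [AddCommGroup A] [Module k A]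
    (br mul : A →ₗ[k] A →ₗ[k] A) (B : A →ₗ[k] A →ₗ[k] k) (lam : k) (P : A →ₗ[k] A) :
    Prop where
  poisson : IsPoisson br mul
  symm : ∀ a b, B a b = B b a
  nondeg : ∀ a, (∀ b, B a b = 0) → a = 0
  br_invariant : ∀ a b c, B (br a b) c = B a (br b c)
  mul_invariant : ∀ a b c, B (mul a b) c = B a (mul b c)
  rb : IsRotaBaxter br mul lam P
  compat : ∀ a b, B a (P b) + B (P a) b + lam • B a b = 0

/-- The semidirect-product bracket on `A ⊕ A*`:
`[(a,x*),(b,y*)] = ([a,b], −ad*(a)y* + ad*(b)x*)`. -/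
noncomputable def sdBr (br : A →ₗ[k] A →ₗ[k] A) :
    (A × Module.Dual k A) →ₗ[k] (A × Module.Dual k A) →ₗ[k] (A × Module.Dual k A) :=
  LinearMap.mk₂ k
    (fun p q => (br p.1 q.1, - (br p.1).dualMap q.2 + (br q.1).dualMap p.2))
    (fun p p' q => by simp [Prod.ext_iff, map_add]; try abel)
    (fun c p q => by simp [Prod.ext_iff, map_smul, smul_add]; try abel)
    (fun p q q' => by simp [Prod.ext_iff, map_add]; try abel)
    (fun c p q => by simp [Prod.ext_iff, map_smul, smul_add]; try abel)

/-- The semidirect-product multiplication on `A ⊕ A*`: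
`(a,x*)·(b,y*) = (a·b, L*(a)y* + L*(b)x*)`. -/
noncomputable def sdMul (mul : A →ₗ[k] A →ₗ[k] A) :
    (A × Module.Dual k A) →ₗ[k] (A × Module.Dual k A) →ₗ[k] (A × Module.Dual k A) :=
  LinearMap.mk₂ k
    (fun p q => (mul p.1 q.1, (mul p.1).dualMap q.2 + (mul q.1).dualMap p.2))
    (fun p p' q => by simp [Prod.ext_iff, map_add]; try abel)
    (fun c p q => by simp [Prod.ext_iff, map_smul, smul_add]; try abel)
    (fun p q q' => by simp [Prod.ext_iff, map_add]; try abel)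
    (fun c p q => by simp [Prod.ext_iff, map_smul, smul_add]; try abel)

/-- The canonical bilinear form `𝔅_d((a,x*),(b,y*)) = ⟨a,y*⟩ + ⟨b,x*⟩` on `A ⊕ A*`. -/
noncomputable def sdForm :
    (A × Module.Dual k A) →ₗ[k] (A × Module.Dual k A) →ₗ[k] k :=
  LinearMap.mk₂ k
    (fun p q => q.2 p.1 + p.2 q.1)
    (fun p p' q => by simp; try ring)
    (fun c p q => by simp [smul_add, smul_smul]; try ring)
    (fun p q q' => by simp; try ring)
    (fun c p q => by simp [smul_add, smul_smul]; try ring)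

end Preamble

/-!
The tensor `r` with `r₊ = I_𝔅` encodes `𝔅`: for every `u ∈ A*` and `c ∈ A`, `𝔅(r₊ u, c) = u(c)`.
Since `r ↦ r₊` is injective in finite dimension, an identity between tensors built from `r` can
be tested after applying `₊`, where `(f ⊗ id) r` and `(id ⊗ g) r` become `I_𝔅 ∘ f*` and
`g ∘ I_𝔅`. Their equality says exactly that `f` and `g` are adjoint for `𝔅`; with antisymmetry of
the bracket and commutativity of the product this is the invariance of `𝔅`. Likewise `τ r = r`
says that the pairing `⟨I_𝔅 x, y⟩` is symmetric, i.e. that `𝔅` is.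
-/

section RPlus

variable {k A : Type*} [Field k] [AddCommGroup A] [Module k A]

lemma rPlus_map_left (f : A →ₗ[k] A) (r : A ⊗[k] A) (x : Module.Dual k A) :
    rPlus (TensorProduct.map f LinearMap.id r) x = rPlus r (f.dualMap x) := by
  induction r using TensorProduct.induction_on with
  | zero => simp
  | tmul a b => simp
  | add r s hr hs => simp [hr, hs]

lemma rPlus_map_right (f : A →ₗ[k] A) (r : A ⊗[k] A) (x : Module.Dual k A) :
    rPlus (TensorProduct.map LinearMap.id f r) x = f (rPlus r x) := by
  induction r using TensorProduct.induction_on with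
  | zero => simp
  | tmul a b => simp
  | add r s hr hs => simp [hr, hs]

lemma apply_rPlus_tauT (r : A ⊗[k] A) (x y : Module.Dual k A) :
    y (rPlus (tauT r) x) = x (rPlus r y) := by
  induction r using TensorProduct.induction_on with
  | zero => simp
  | tmul a b => simp [tauT, mul_comm]
  | add r s hr hs => simp [hr, hs]

lemma rPlus_injective [FiniteDimensional k A] :
    Function.Injective (rPlus : A ⊗[k] A →ₗ[k] Module.Dual k A →ₗ[k] A) := by
  have h : (rPlus : A ⊗[k] A →ₗ[k] Module.Dual k A →ₗ[k] A) =
      (dualTensorHomEquiv k (Module.Dual k A) A).toLinearMap ∘ₗ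
        (TensorProduct.congr (Module.evalEquiv k A) (LinearEquiv.refl k A)).toLinearMap := by
    apply TensorProduct.ext'
    intro a b
    ext x
    simp [dualTensorHomEquiv]
  rw [h, LinearMap.coe_comp, LinearEquiv.coe_coe, LinearEquiv.coe_coe]
  exact (dualTensorHomEquiv k (Module.Dual k A) A).injective.comp
    (TensorProduct.congr (Module.evalEquiv k A) (LinearEquiv.refl k A)).injective

end RPlus

section FormTensor

variable {k A : Type*} [Field k] [AddCommGroup A] [Module k A] [FiniteDimensional k A]
  {B : A →ₗ[k] A →ₗ[k] k} {IB : Module.Dual k A ≃ₗ[k] A} {r : A ⊗[k] A}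

lemma tauT_eq_self_iff_symm (hIB : ∀ a b, IB.symm a b = B a b)
    (hr : ∀ x, rPlus r x = IB x) :
    tauT r = r ↔ ∀ a b, B a b = B b a := by
  rw [← rPlus_injective.eq_iff]
  constructor
  · intro h a b
    have := apply_rPlus_tauT r (IB.symm a) (IB.symm b)
    rw [h, hr, hr] at this
    simpa [hIB] using this.symm
  · intro hsymm
    ext x : 1
    refine sub_eq_zero.mp <| (Module.forall_dual_apply_eq_zero_iff k _).mp fun y => ?_
    have := hsymm (IB y) (IB x)
    simp only [← hIB, LinearEquiv.symm_apply_apply] at this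
    rw [map_sub, apply_rPlus_tauT, hr, hr, this, sub_self]

lemma map_left_eq_map_right_iff (hIB : ∀ a b, IB.symm a b = B a b)
    (hr : ∀ x, rPlus r x = IB x) (f g : A →ₗ[k] A) :
    TensorProduct.map f LinearMap.id r = TensorProduct.map LinearMap.id g r ↔
      ∀ a c, B (g a) c = B a (f c) := by
  rw [← rPlus_injective.eq_iff, LinearMap.ext_iff]
  simp only [rPlus_map_left, rPlus_map_right, hr, ← LinearEquiv.eq_symm_apply, LinearMap.ext_iff,
    LinearMap.dualMap_apply, ← hIB]
  constructor
  · intro h a c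
    simpa using (h (IB.symm a) c).symm
  · intro h x c
    simpa using (h (IB x) c).symm

lemma ad_invariant_iff (hIB : ∀ a b, IB.symm a b = B a b) (hr : ∀ x, rPlus r x = IB x)
    {br : A →ₗ[k] A →ₗ[k] A} (hanti : ∀ a b, br a b = - br b a) :
    (∀ a, TensorProduct.map (br a) LinearMap.id r +
        TensorProduct.map LinearMap.id (br a) r = 0) ↔
      ∀ a b c, B (br a b) c = B a (br b c) := by
  have hneg : ∀ a, TensorProduct.map LinearMap.id (-br a) r =
      -TensorProduct.map LinearMap.id (br a) r :=
    fun a => congrArg (· r) (LinearMap.lTensor_neg (M := A) (br a))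
  simp only [add_eq_zero_iff_eq_neg, ← hneg, map_left_eq_map_right_iff hIB hr, LinearMap.neg_apply,
    ← hanti]
  exact forall_comm

lemma L_invariant_iff (hIB : ∀ a b, IB.symm a b = B a b) (hr : ∀ x, rPlus r x = IB x)
    {mul : A →ₗ[k] A →ₗ[k] A} (hcomm : ∀ a b, mul a b = mul b a) :
    (∀ a, TensorProduct.map (mul a) LinearMap.id r -
        TensorProduct.map LinearMap.id (mul a) r = 0) ↔
      ∀ a b c, B (mul a b) c = B a (mul b c) := by
  simp only [sub_eq_zero, map_left_eq_map_right_iff hIB hr]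
  exact forall_comm.trans (forall_congr' fun a => forall_congr' fun b => by rw [hcomm b a])

end FormTensor

theorem statement4_general {k A : Type*} [Field k] [AddCommGroup A] [Module k A]
    [FiniteDimensional k A]
    (br mul : A →ₗ[k] A →ₗ[k] A) (hP : IsPoisson br mul)
    (B : A →ₗ[k] A →ₗ[k] k)
    (IB : Module.Dual k A ≃ₗ[k] A) (hIB : ∀ a b, IB.symm a b = B a b)
    (rB : A ⊗[k] A) (hrB : ∀ x y : Module.Dual k A, y (rPlus rB x) = y (IB x)) :
    ((∀ a b, B a b = B b a) ∧
      (∀ a b c, B (br a b) c = B a (br b c)) ∧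
      (∀ a b c, B (mul a b) c = B a (mul b c))) ↔
    (tauT rB = rB ∧ IsAdLInvariant br mul rB) := by
  have hr : ∀ x, rPlus rB x = IB x := fun x =>
    sub_eq_zero.mp <| (Module.forall_dual_apply_eq_zero_iff k _).mp fun y => by
      rw [map_sub, hrB, sub_self]
  rw [tauT_eq_self_iff_symm hIB hr, IsAdLInvariant, forall_and,
    ad_invariant_iff hIB hr hP.antisymm, L_invariant_iff hIB hr hP.comm]

/-- `(A, br, mul, B)` is a quadratic Poisson algebra iff the `2`-tensor `r_𝔅`
associated to the nondegenerate bilinear form `B` is symmetric and `(ad, L)`-invariant. -/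
theorem statement4 {k A : Type*} [Field k] [AddCommGroup A] [Module k A]
    [FiniteDimensional k A]
    (br mul : A →ₗ[k] A →ₗ[k] A) (hP : IsPoisson br mul)
    (B : A →ₗ[k] A →ₗ[k] k)
    (hnd : ∀ a, (∀ b, B a b = 0) → a = 0)
    (IB : Module.Dual k A ≃ₗ[k] A) (hIB : ∀ a b, IB.symm a b = B a b)
    (rB : A ⊗[k] A) (hrB : ∀ x y : Module.Dual k A, y (rPlus rB x) = y (IB x)) :
    ((∀ a b, B a b = B b a) ∧
      (∀ a b c, B (br a b) c = B a (br b c)) ∧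
      (∀ a b c, B (mul a b) c = B a (mul b c))) ↔
    (tauT rB = rB ∧ IsAdLInvariant br mul rB) :=
  statement4_general br mul hP B IB hIB rB hrB
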